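/- The covariance function R(s,t) = (1/2)(t^{2H} + s^{2H} − |t−s|^{2H}) of fractional Brownian motion with H ∈ (0,1) is positive semidefinite on [0,∞): for any t₁,...,t_n ≥ 0 and real a₁,...,a_n, ∑_{i,j} a_i a_j R(t_i,t_j) ≥ 0. -/

import Mathlib

open Real MeasureTheory Set Finset

/-!
For `0 < α < 2` the function `|x| ^ α` has the Lévy–Khintchine representation
`|x| ^ α = C⁻¹ ∫₀^∞ (1 - cos (x u)) u ^ (-1 - α) du` with `0 < C < ∞`,
by the substitution `v = |x| u`. Since `(1 - cos x u) + (1 - cos y u) - (1 - cos (x - y) u)` equals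
`(1 - cos x u)(1 - cos y u) + sin x u sin y u`, the kernel `|x|^α + |y|^α - |x - y|^α` is an
integral of kernels of the form `f(x) f(y) + g(x) g(y)` with nonnegative weight, each of which
is positive semidefinite.
-/

noncomputable def levyIntegrand (α x u : ℝ) : ℝ := (1 - cos (x * u)) * u ^ (-1 - α)

section levyIntegrand

variable {α : ℝ}

lemma levyIntegrand_nonneg (x : ℝ) {u : ℝ} (hu : 0 ≤ u) : 0 ≤ levyIntegrand α x u :=
  mul_nonneg (sub_nonneg.mpr (cos_le_one _)) (rpow_nonneg hu _)

lemma levyIntegrand_abs (x : ℝ) : levyIntegrand α |x| = levyIntegrand α x := by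
  funext u
  rcases abs_choice x with h | h <;> simp [levyIntegrand, h]

lemma levyIntegrand_zero_left : levyIntegrand α 0 = 0 := by
  funext u
  simp [levyIntegrand]

lemma levyIntegrand_eq_mul_comp_mul {x u : ℝ} (hx : 0 < x) (hu : 0 < u) :
    levyIntegrand α x u = x ^ (1 + α) * levyIntegrand α 1 (x * u) := by
  have hx_pow : x ^ (1 + α) * x ^ (-1 - α) = 1 := by
    rw [← rpow_add hx]; norm_num
  rw [levyIntegrand, levyIntegrand, one_mul, mul_rpow hx.le hu.le]
  linear_combination (1 - cos (x * u)) * u ^ (-1 - α) * hx_pow.symm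

lemma levyIntegrand_add_sub (x y u : ℝ) :
    levyIntegrand α x u + levyIntegrand α y u - levyIntegrand α (x - y) u =
      u ^ (-1 - α) * ((1 - cos (x * u)) * (1 - cos (y * u)) + sin (x * u) * sin (y * u)) := by
  simp only [levyIntegrand]
  rw [sub_mul x y u, cos_sub]
  ring

lemma integrableOn_levyIntegrand_one (h0 : 0 < α) (h2 : α < 2) :
    IntegrableOn (levyIntegrand α 1) (Ioi 0) := by
  have hmeas : AEStronglyMeasurable (levyIntegrand α 1) := by
    unfold levyIntegrand; fun_prop
  rw [← Ioc_union_Ioi_eq_Ioi zero_le_one]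
  refine IntegrableOn.union ?_ ?_
  · have hdom : IntegrableOn (fun v : ℝ => v ^ (1 - α) / 2) (Ioc 0 1) :=
      (((intervalIntegral.integrableOn_Ioo_rpow_iff one_pos).mpr (by linarith)).congr_set_ae
        Ioo_ae_eq_Ioc.symm).div_const 2
    refine hdom.mono' hmeas.restrict ((ae_restrict_iff' measurableSet_Ioc).mpr
      (.of_forall fun v hv => ?_))
    rw [norm_of_nonneg (levyIntegrand_nonneg 1 hv.1.le), levyIntegrand, one_mul]
    calc (1 - cos v) * v ^ (-1 - α) ≤ v ^ 2 / 2 * v ^ (-1 - α) := by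
          have := one_sub_sq_div_two_le_cos (x := v)
          have := rpow_nonneg hv.1.le (-1 - α)
          gcongr
          linarith
      _ = v ^ (1 - α) / 2 := by
          rw [← rpow_natCast, div_mul_eq_mul_div, ← rpow_add hv.1]
          norm_num
          ring_nf
  · have hdom : IntegrableOn (fun v : ℝ => 2 * v ^ (-1 - α)) (Ioi 1) :=
      (integrableOn_Ioi_rpow_of_lt (by linarith) one_pos).const_mul 2
    refine hdom.mono' hmeas.restrict ((ae_restrict_iff' measurableSet_Ioi).mpr
      (.of_forall fun v hv => ?_))
    have hv0 : (0 : ℝ) < v := one_pos.trans hv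
    rw [norm_of_nonneg (levyIntegrand_nonneg 1 hv0.le), levyIntegrand, one_mul]
    gcongr
    linarith [neg_one_le_cos v]

lemma integrableOn_levyIntegrand (h0 : 0 < α) (h2 : α < 2) (x : ℝ) :
    IntegrableOn (levyIntegrand α x) (Ioi 0) := by
  rw [← levyIntegrand_abs]
  rcases (abs_nonneg x).eq_or_lt with hx | hx
  · rw [← hx, levyIntegrand_zero_left]
    exact integrableOn_zero
  · have hcomp : IntegrableOn (fun u => levyIntegrand α 1 (|x| * u)) (Ioi 0) :=
      (integrableOn_Ioi_comp_mul_left_iff _ 0 hx).mpr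
        (by simpa using integrableOn_levyIntegrand_one h0 h2)
    exact IntegrableOn.congr_fun (hcomp.const_mul (|x| ^ (1 + α)))
      (fun u hu => (levyIntegrand_eq_mul_comp_mul hx hu).symm) measurableSet_Ioi

lemma setIntegral_levyIntegrand (h0 : 0 < α) (x : ℝ) :
    ∫ u in Ioi 0, levyIntegrand α x u = |x| ^ α * ∫ v in Ioi 0, levyIntegrand α 1 v := by
  rw [← levyIntegrand_abs]
  rcases (abs_nonneg x).eq_or_lt with hx | hx
  · rw [← hx, levyIntegrand_zero_left, zero_rpow h0.ne']
    simp
  · rw [setIntegral_congr_fun measurableSet_Ioi fun u hu => levyIntegrand_eq_mul_comp_mul hx hu,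
      integral_const_mul, integral_comp_mul_left_Ioi _ 0 hx, mul_zero, smul_eq_mul, ← mul_assoc,
      ← rpow_neg_one, ← rpow_add hx]
    ring_nf

lemma setIntegral_levyIntegrand_one_pos (h0 : 0 < α) (h2 : α < 2) :
    0 < ∫ v in Ioi 0, levyIntegrand α 1 v := by
  rw [setIntegral_pos_iff_support_of_nonneg_ae _ (integrableOn_levyIntegrand_one h0 h2)]
  · refine lt_of_lt_of_le ?_
      (measure_mono (show Ioo (0 : ℝ) 1 ⊆ _ from fun v hv => ⟨?_, hv.1⟩))
    · simp
    · have hcos : cos v < 1 := by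
        simpa using cos_lt_cos_of_nonneg_of_le_pi le_rfl (by linarith [pi_gt_three, hv.2]) hv.1
      rw [Function.mem_support, levyIntegrand, one_mul]
      exact mul_ne_zero (sub_ne_zero.mpr hcos.ne') (rpow_pos_of_pos hv.1 _).ne'
  · exact (ae_restrict_iff' measurableSet_Ioi).mpr
      (.of_forall fun v hv => levyIntegrand_nonneg 1 (le_of_lt hv))

lemma setIntegral_levyIntegrand_add_sub (h0 : 0 < α) (h2 : α < 2) (x y : ℝ) :
    ∫ u in Ioi 0, (levyIntegrand α x u + levyIntegrand α y u - levyIntegrand α (x - y) u) =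
      (|x| ^ α + |y| ^ α - |x - y| ^ α) * ∫ v in Ioi 0, levyIntegrand α 1 v := by
  have hint := integrableOn_levyIntegrand h0 h2
  have hsum : IntegrableOn (fun u => levyIntegrand α x u + levyIntegrand α y u) (Ioi 0) :=
    (hint x).add (hint y)
  rw [integral_sub hsum (hint _), integral_add (hint x) (hint y),
    setIntegral_levyIntegrand h0 x, setIntegral_levyIntegrand h0 y,
    setIntegral_levyIntegrand h0 (x - y)]
  ring

end levyIntegrand

lemma sum_sum_mul_mul_add_mul_nonneg {ι : Type*} [Fintype ι] (a f g : ι → ℝ) :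
    0 ≤ ∑ i, ∑ j, a i * a j * (f i * f j + g i * g j) := by
  have hsq : ∑ i, ∑ j, a i * a j * (f i * f j + g i * g j) =
      (∑ i, a i * f i) ^ 2 + (∑ i, a i * g i) ^ 2 := by
    simp only [sq, Finset.sum_mul_sum, ← Finset.sum_add_distrib]
    exact Finset.sum_congr rfl fun i _ => Finset.sum_congr rfl fun j _ => by ring
  rw [hsq]
  positivity

theorem sum_sum_mul_rpow_abs_kernel_nonneg {ι : Type*} [Fintype ι] {α : ℝ} (h0 : 0 < α)
    (h2 : α < 2) (x a : ι → ℝ) :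
    0 ≤ ∑ i, ∑ j, a i * a j * (|x i| ^ α + |x j| ^ α - |x i - x j| ^ α) := by
  set K : ι → ι → ℝ → ℝ := fun i j u =>
    a i * a j *
      (levyIntegrand α (x i) u + levyIntegrand α (x j) u - levyIntegrand α (x i - x j) u)
  have hK_int : ∀ i j, Integrable (K i j) (volume.restrict (Ioi 0)) := fun i j =>
    (((integrableOn_levyIntegrand h0 h2 _).add (integrableOn_levyIntegrand h0 h2 _)).sub
      (integrableOn_levyIntegrand h0 h2 _)).const_mul _
  have hK_nonneg : ∀ u ∈ Ioi (0 : ℝ), 0 ≤ ∑ i, ∑ j, K i j u := fun u hu => by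
    simp only [K, levyIntegrand_add_sub, mul_left_comm (a _ * a _) (u ^ (-1 - α)),
      ← Finset.mul_sum]
    exact mul_nonneg (rpow_nonneg (le_of_lt hu) _) (sum_sum_mul_mul_add_mul_nonneg _ _ _)
  have hrepr : (∫ v in Ioi 0, levyIntegrand α 1 v) *
      ∑ i, ∑ j, a i * a j * (|x i| ^ α + |x j| ^ α - |x i - x j| ^ α) =
      ∫ u in Ioi 0, ∑ i, ∑ j, K i j u := by
    rw [integral_finsetSum _ fun i _ => integrable_finsetSum _ fun j _ => hK_int i j,
      Finset.mul_sum]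
    refine Finset.sum_congr rfl fun i _ => ?_
    rw [integral_finsetSum _ fun j _ => hK_int i j, Finset.mul_sum]
    refine Finset.sum_congr rfl fun j _ => ?_
    rw [integral_const_mul, setIntegral_levyIntegrand_add_sub h0 h2]
    ring
  refine nonneg_of_mul_nonneg_right ?_ (setIntegral_levyIntegrand_one_pos h0 h2)
  rw [hrepr]
  exact setIntegral_nonneg measurableSet_Ioi hK_nonneg

/-- The fBm covariance R(s,t) = (1/2)(t^{2H} + s^{2H} - |t-s|^{2H}) is positive semidefinite
    on [0,∞). -/
theorem fbm_covariance_posdef (H : ℝ) (hH : H ∈ Set.Ioo (0:ℝ) 1)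
    (R : ℝ → ℝ → ℝ)
    (hR : ∀ s t, R s t = (1/2) * (t ^ (2 * H) + s ^ (2 * H) - |t - s| ^ (2 * H)))
    (n : ℕ) (t : Fin n → ℝ) (ht : ∀ i, 0 ≤ t i) (a : Fin n → ℝ) :
    0 ≤ ∑ i, ∑ j, a i * a j * R (t i) (t j) := by
  obtain ⟨hH0, hH1⟩ := hH
  have hR_abs : ∀ i j, R (t i) (t j) =
      (1 / 2) * (|t i| ^ (2 * H) + |t j| ^ (2 * H) - |t i - t j| ^ (2 * H)) := fun i j => by
    rw [hR, abs_of_nonneg (ht i), abs_of_nonneg (ht j), abs_sub_comm]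
    ring
  have hpsd := sum_sum_mul_rpow_abs_kernel_nonneg (α := 2 * H) (by positivity) (by linarith) t a
  calc 0 ≤ (1 / 2) * ∑ i, ∑ j, a i * a j *
        (|t i| ^ (2 * H) + |t j| ^ (2 * H) - |t i - t j| ^ (2 * H)) :=
        mul_nonneg (by norm_num) hpsd
    _ = ∑ i, ∑ j, a i * a j * R (t i) (t j) := by
      simp only [hR_abs, Finset.mul_sum]
      exact Finset.sum_congr rfl fun i _ => Finset.sum_congr rfl fun j _ => by ring
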